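/- Let n be a positive integer, δ ∈ {0, 1}, and β ∈ ℂ with |β| ≥ (R₀ + ω₀^δ)(1 + e²)^{3n/2}/(√2 e)^n. If p ∈ ℋ satisfies (p(z))^δ + β (z p′(z))^n ≺ 𝔅(z), then p(z) ≺ 𝔅(z). -/

import Mathlib

open Complex

noncomputable section

/-- The open unit disk in the complex plane. -/
def unitDisk : Set ℂ := Metric.ball 0 1

/-- `f` is subordinate to `g` on the unit disk: there is an analytic Schwarz function `w`
with `w 0 = 0`, `|w z| < 1` on the disk, and `f = g ∘ w` on the disk. -/
def Subord (f g : ℂ → ℂ) : Prop :=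
  ∃ w : ℂ → ℂ, DifferentiableOn ℂ w unitDisk ∧ w 0 = 0 ∧
    (∀ z ∈ unitDisk, ‖w z‖ < 1) ∧ ∀ z ∈ unitDisk, f z = g (w z)

/-- The function `𝔅(z) = √(1 + tanh z)` (principal branch). -/
def bean (z : ℂ) : ℂ := (1 + Complex.tanh z) ^ ((1 : ℂ) / 2)

/-- `R₀ = e √(2/(e² - 1))`. -/
def R₀ : ℝ := Real.exp 1 * Real.sqrt (2 / (Real.exp 1 ^ 2 - 1))

/-- `ω₀ = max_{θ ∈ [0, 2π)} |𝔅(e^{iθ})|`. -/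
def ω₀ : ℝ :=
  sSup ((fun θ : ℝ => ‖bean (Complex.exp (θ * Complex.I))‖) '' Set.Ico 0 (2 * Real.pi))

/-!
Put `q(z) = z p'(z)`, fix `r < 1` and let `S = max_{|z| ≤ r} |q(z)|`. As `q(0) = 0`, Schwarz's
lemma gives `|p'| ≤ S / r` on `|z| ≤ r`, hence `|p - 1| ≤ S` there. Since `|𝔅| ≤ √3` on the
unit disk, the subordination at a point where `|q| = S` yields `|β| S^n ≤ √3 + 1 + S`, and as
`|β| > 4^n (√3 + 5/4)` this forces `S ≤ 1/4`. So `|p - 1| ≤ 1/4` on the unit disk, `p²` stays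
within `9/16` of `1`, and `w = artanh (p² - 1)` is a Schwarz function with `𝔅 ∘ w = √(p²) = p`.
-/

open Metric Set

lemma sq_norm_sinh_add_mul_I (x y : ℝ) :
    ‖sinh (x + y * I)‖ ^ 2 = Real.sinh x ^ 2 + Real.sin y ^ 2 := by
  have h : sinh ((x : ℂ) + y * I)
      = ↑(Real.sinh x * Real.cos y) + ↑(Real.cosh x * Real.sin y) * I := by
    rw [sinh_add, cosh_mul_I, sinh_mul_I, ← ofReal_sinh, ← ofReal_cosh, ← ofReal_cos,
      ← ofReal_sin]
    push_cast
    ring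
  rw [Complex.sq_norm, h, normSq_add_mul_I]
  nlinarith [Real.sin_sq_add_cos_sq y, Real.cosh_sq x]

lemma sq_norm_cosh_add_mul_I (x y : ℝ) :
    ‖cosh (x + y * I)‖ ^ 2 = Real.sinh x ^ 2 + Real.cos y ^ 2 := by
  have h : cosh ((x : ℂ) + y * I)
      = ↑(Real.cosh x * Real.cos y) + ↑(Real.sinh x * Real.sin y) * I := by
    rw [cosh_add, cosh_mul_I, sinh_mul_I, ← ofReal_sinh, ← ofReal_cosh, ← ofReal_cos,
      ← ofReal_sin]
    push_cast
    ring
  rw [Complex.sq_norm, h, normSq_add_mul_I]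
  nlinarith [Real.sin_sq_add_cos_sq y, Real.cosh_sq x]

lemma norm_tanh_le_two {z : ℂ} (hz : |z.im| ≤ 1) : ‖tanh z‖ ≤ 2 := by
  have hsinh := sq_norm_sinh_add_mul_I z.re z.im
  have hcosh := sq_norm_cosh_add_mul_I z.re z.im
  rw [re_add_im] at hsinh hcosh
  have hcos : 1 / 2 ≤ Real.cos z.im := by
    nlinarith [Real.one_sub_sq_div_two_le_cos (x := z.im), sq_abs z.im, abs_nonneg z.im]
  have hsq : ‖sinh z‖ ^ 2 ≤ (2 * ‖cosh z‖) ^ 2 := by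
    nlinarith [Real.sin_sq_add_cos_sq z.im, sq_nonneg (Real.sinh z.re)]
  have hcosh_pos : 0 < ‖cosh z‖ := by
    nlinarith [norm_nonneg (cosh z), sq_nonneg (Real.sinh z.re)]
  rw [tanh_eq_sinh_div_cosh, norm_div, div_le_iff₀ hcosh_pos]
  nlinarith [norm_nonneg (sinh z)]

lemma bean_sq (z : ℂ) : bean z ^ 2 = 1 + tanh z := by
  simp [bean]

lemma norm_bean_le_sqrt_three {z : ℂ} (hz : |z.im| ≤ 1) : ‖bean z‖ ≤ √3 := by
  rw [Real.le_sqrt (norm_nonneg _) (by norm_num), ← norm_pow, bean_sq]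
  calc ‖1 + tanh z‖ ≤ ‖(1 : ℂ)‖ + ‖tanh z‖ := norm_add_le _ _
    _ ≤ 3 := by rw [norm_one]; linarith [norm_tanh_le_two hz]

lemma one_le_ω₀ : 1 ≤ ω₀ := by
  have hbdd : BddAbove ((fun θ : ℝ => ‖bean (exp (θ * I))‖) '' Ico 0 (2 * Real.pi)) := by
    refine ⟨√3, ?_⟩
    rintro _ ⟨θ, -, rfl⟩
    exact norm_bean_le_sqrt_three ((abs_im_le_norm _).trans (norm_exp_ofReal_mul_I θ).le)
  have hmem : ‖bean 1‖ ∈ (fun θ : ℝ => ‖bean (exp (θ * I))‖) '' Ico 0 (2 * Real.pi) :=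
    ⟨0, ⟨le_rfl, Real.two_pi_pos⟩, by simp⟩
  have hbean_one : 1 ≤ ‖bean 1‖ ^ 2 := by
    have htanh : 0 ≤ Real.tanh 1 := by rw [Real.tanh_eq_sinh_div_cosh]; positivity
    rw [← norm_pow, bean_sq, ← ofReal_one, ← ofReal_tanh, ← ofReal_add, norm_real,
      Real.norm_of_nonneg (by linarith)]
    linarith
  calc 1 ≤ ‖bean 1‖ := by nlinarith [norm_nonneg (bean 1)]
    _ ≤ ω₀ := le_csSup hbdd hmem

lemma three_halves_le_R₀ : 3 / 2 ≤ R₀ := by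
  have he : 0 < Real.exp 1 := Real.exp_pos 1
  have he3 : Real.exp 1 < 3 := by linarith [Real.exp_one_lt_d9]
  have he1 : 1 < Real.exp 1 ^ 2 := by nlinarith [Real.add_one_lt_exp one_ne_zero]
  have hsqrt : 3 / (2 * Real.exp 1) ≤ √(2 / (Real.exp 1 ^ 2 - 1)) := by
    rw [Real.le_sqrt (by positivity) (div_nonneg zero_le_two (by linarith)), div_pow,
      div_le_div_iff₀ (by positivity) (by linarith)]
    nlinarith
  calc 3 / 2 = Real.exp 1 * (3 / (2 * Real.exp 1)) := by field_simp
    _ ≤ R₀ := mul_le_mul_of_nonneg_left hsqrt he.le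

lemma six_le_growth_base :
    6 ≤ (1 + Real.exp 1 ^ 2) ^ ((3 : ℝ) / 2) / (√2 * Real.exp 1) := by
  have he : 0 < Real.exp 1 := Real.exp_pos 1
  have he7 : 7 ≤ Real.exp 1 ^ 2 := by nlinarith [Real.exp_one_gt_d9]
  have hx : 0 ≤ 1 + Real.exp 1 ^ 2 := by positivity
  rw [le_div_iff₀ (by positivity), ← pow_le_pow_iff_left₀ (by positivity) (by positivity)
    two_ne_zero, ← Real.rpow_mul_natCast hx]
  have hcube : (1 + Real.exp 1 ^ 2) ^ ((3 : ℝ) / 2 * (2 : ℕ)) = (1 + Real.exp 1 ^ 2) ^ 3 := by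
    norm_num
  rw [hcube, mul_pow, mul_pow, Real.sq_sqrt zero_le_two]
  nlinarith [mul_nonneg (sub_nonneg.2 he7) (sub_nonneg.2 he7)]

lemma three_mul_four_pow_lt {n δ : ℕ} (hn : n ≠ 0) (hδ : δ = 0 ∨ δ = 1) :
    3 * 4 ^ n < (R₀ + ω₀ ^ δ) * (1 + Real.exp 1 ^ 2) ^ ((3 * (n : ℝ)) / 2) /
      (Real.sqrt 2 * Real.exp 1) ^ n := by
  have hbase : (1 + Real.exp 1 ^ 2) ^ ((3 * (n : ℝ)) / 2) / (√2 * Real.exp 1) ^ n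
      = ((1 + Real.exp 1 ^ 2) ^ ((3 : ℝ) / 2) / (√2 * Real.exp 1)) ^ n := by
    rw [div_pow, ← Real.rpow_mul_natCast (by positivity)]
    ring_nf
  have hcoeff : 5 / 2 ≤ R₀ + ω₀ ^ δ := by
    rcases hδ with rfl | rfl <;> linarith [three_halves_le_R₀, one_le_ω₀, pow_zero ω₀, pow_one ω₀]
  have hpow : 3 / 2 * 4 ^ n ≤ (6 : ℝ) ^ n := by
    calc 3 / 2 * 4 ^ n ≤ (3 / 2 : ℝ) ^ n * 4 ^ n := by gcongr; exact le_self_pow₀ (by norm_num) hn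
      _ = 6 ^ n := by rw [← mul_pow]; norm_num
  rw [mul_div_assoc, hbase]
  calc 3 * 4 ^ n < 5 / 2 * (3 / 2 * 4 ^ n) := by nlinarith [pow_pos (four_pos (α := ℝ)) n]
    _ ≤ (R₀ + ω₀ ^ δ) * 6 ^ n := by gcongr
    _ ≤ (R₀ + ω₀ ^ δ) * ((1 + Real.exp 1 ^ 2) ^ ((3 : ℝ) / 2) / (√2 * Real.exp 1)) ^ n := by
      gcongr
      exact six_le_growth_base

lemma le_quarter_of_mul_pow_le_add {a b S : ℝ} {n : ℕ} (hn : n ≠ 0) (hb : 0 ≤ b)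
    (ha : 4 ^ n * (b + 1 / 4) < a) (h : a * S ^ n ≤ b + S) : S ≤ 1 / 4 := by
  by_contra! hS4
  have hpow : 4 * S ≤ (4 * S) ^ n := le_self_pow₀ (by linarith) hn
  have hlt : 4 ^ n * (b + 1 / 4) * S ^ n < a * S ^ n :=
    mul_lt_mul_of_pos_right ha (pow_pos (by linarith) n)
  rw [mul_right_comm, ← mul_pow] at hlt
  nlinarith

section SchwarzBound

variable {f : ℂ → ℂ} {U : Set ℂ} {r S : ℝ}

lemma dslope_mul_deriv_eq {z : ℂ} (hf : DifferentiableAt ℂ (deriv f) 0) :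
    dslope (fun w => w * deriv f w) 0 z = deriv f z := by
  rcases eq_or_ne z 0 with rfl | hz
  · rw [dslope_same]
    exact ((hasDerivAt_id' 0).mul hf.hasDerivAt).deriv.trans (by simp)
  · simpa using dslope_sub_smul_of_ne (deriv f) hz

lemma norm_deriv_le_of_norm_mul_deriv_le (hU : IsOpen U) (hf : DifferentiableOn ℂ f U)
    (hr : 0 < r) (hrU : closedBall 0 r ⊆ U)
    (hS : ∀ z ∈ closedBall (0 : ℂ) r, ‖z * deriv f z‖ ≤ S) {z : ℂ}
    (hz : z ∈ closedBall (0 : ℂ) r) : ‖deriv f z‖ ≤ S / r := by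
  have hf' : DifferentiableOn ℂ (deriv f) U := hf.deriv hU
  rcases (mem_closedBall_zero_iff.1 hz).lt_or_eq with hlt | heq
  · have hq : DifferentiableOn ℂ (fun w => w * deriv f w) (ball 0 r) :=
      (differentiableOn_id.mul hf').mono (ball_subset_closedBall.trans hrU)
    have hmaps : MapsTo (fun w => w * deriv f w) (ball 0 r) (closedBall (0 * deriv f 0) S) :=
      fun w hw => by simpa using hS w (ball_subset_closedBall hw)
    have hf'0 : DifferentiableAt ℂ (deriv f) 0 :=
      hf'.differentiableAt (hU.mem_nhds (hrU (mem_closedBall_self hr.le)))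
    rw [← dslope_mul_deriv_eq hf'0]
    exact norm_dslope_le_div_of_mapsTo_ball hq hmaps (mem_ball_zero_iff.2 hlt)
  · rw [le_div_iff₀ hr, ← heq, mul_comm, ← norm_mul]
    exact hS z hz

lemma norm_sub_apply_zero_le_of_norm_mul_deriv_le (hU : IsOpen U) (hf : DifferentiableOn ℂ f U)
    (hr : 0 < r) (hrU : closedBall 0 r ⊆ U)
    (hS : ∀ z ∈ closedBall (0 : ℂ) r, ‖z * deriv f z‖ ≤ S) {z : ℂ}
    (hz : z ∈ closedBall (0 : ℂ) r) : ‖f z - f 0‖ ≤ S := by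
  have hS0 : 0 ≤ S := (norm_nonneg _).trans (hS 0 (mem_closedBall_self hr.le))
  calc ‖f z - f 0‖ ≤ S / r * ‖z - 0‖ :=
        (convex_closedBall 0 r).norm_image_sub_le_of_norm_deriv_le
          (fun x hx => hf.differentiableAt (hU.mem_nhds (hrU hx)))
          (fun x hx => norm_deriv_le_of_norm_mul_deriv_le hU hf hr hrU hS hx)
          (mem_closedBall_self hr.le) hz
    _ ≤ S / r * r := by
        gcongr
        simpa using hz
    _ = S := div_mul_cancel₀ S hr.ne'

end SchwarzBound

lemma norm_sub_apply_zero_le_quarter_on_closedBall {f : ℂ → ℂ} {U : Set ℂ} {r a b : ℝ} {n : ℕ}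
    (hU : IsOpen U) (hf : DifferentiableOn ℂ f U) (hr : 0 < r) (hrU : closedBall 0 r ⊆ U)
    (hn : n ≠ 0) (hb : 0 ≤ b) (ha : 4 ^ n * (b + 1 / 4) < a)
    (h : ∀ z ∈ closedBall (0 : ℂ) r, a * ‖z * deriv f z‖ ^ n ≤ b + ‖f z - f 0‖) {z : ℂ}
    (hz : z ∈ closedBall (0 : ℂ) r) : ‖f z - f 0‖ ≤ 1 / 4 := by
  have hcont : ContinuousOn (fun w => ‖w * deriv f w‖) (closedBall 0 r) :=
    ((continuousOn_id.mul (hf.deriv hU).continuousOn).mono hrU).norm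
  obtain ⟨z₁, hz₁, hmax⟩ :=
    (isCompact_closedBall (0 : ℂ) r).exists_isMaxOn (nonempty_closedBall.2 hr.le) hcont
  have hbound : ∀ w ∈ closedBall (0 : ℂ) r, ‖f w - f 0‖ ≤ ‖z₁ * deriv f z₁‖ := fun w hw =>
    norm_sub_apply_zero_le_of_norm_mul_deriv_le hU hf hr hrU (fun v hv => hmax hv) hw
  have hS : ‖z₁ * deriv f z₁‖ ≤ 1 / 4 :=
    le_quarter_of_mul_pow_le_add hn hb ha ((h z₁ hz₁).trans (by linarith [hbound z₁ hz₁]))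
  exact (hbound z hz).trans hS

lemma norm_sub_apply_zero_le_quarter {f : ℂ → ℂ} {a b : ℝ} {n : ℕ}
    (hf : DifferentiableOn ℂ f unitDisk) (hn : n ≠ 0) (hb : 0 ≤ b)
    (ha : 4 ^ n * (b + 1 / 4) < a)
    (h : ∀ z ∈ unitDisk, a * ‖z * deriv f z‖ ^ n ≤ b + ‖f z - f 0‖) :
    ∀ z ∈ unitDisk, ‖f z - f 0‖ ≤ 1 / 4 := by
  intro z hz
  obtain ⟨r, hzr, hr1⟩ := exists_between (mem_ball_zero_iff.1 hz)
  have hrU : closedBall 0 r ⊆ unitDisk := closedBall_subset_ball hr1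
  exact norm_sub_apply_zero_le_quarter_on_closedBall isOpen_ball hf
    ((norm_nonneg z).trans_lt hzr) hrU hn hb ha (fun w hw => h w (hrU hw))
    (mem_closedBall_zero_iff.2 hzr.le)

namespace Complex

lemma one_add_mem_slitPlane {b : ℂ} (hb : ‖b‖ < 1) : 1 + b ∈ slitPlane :=
  Or.inl (by simp only [add_re, one_re]; linarith [neg_abs_le b.re, abs_re_le_norm b])

lemma one_sub_mem_slitPlane {b : ℂ} (hb : ‖b‖ < 1) : 1 - b ∈ slitPlane := by
  simpa [sub_eq_add_neg] using one_add_mem_slitPlane (b := -b) (by rwa [norm_neg])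

def artanh (a : ℂ) : ℂ := (log (1 + a) - log (1 - a)) / 2

lemma tanh_artanh {a : ℂ} (h₁ : 1 + a ≠ 0) (h₂ : 1 - a ≠ 0) : tanh (artanh a) = a := by
  have hexp : exp (artanh a) ^ 2 * (1 - a) = 1 + a := by
    rw [← exp_nat_mul, artanh, Nat.cast_ofNat, mul_div_cancel₀ _ two_ne_zero, exp_sub,
      exp_log h₁, exp_log h₂, div_mul_cancel₀ _ h₂]
  have hE : exp (artanh a) ≠ 0 := exp_ne_zero _
  have hcosh : cosh (artanh a) ≠ 0 := by
    intro h
    rw [cosh, exp_neg] at h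
    field_simp at h
    have h2 : (2 : ℂ) = 0 := by linear_combination (1 - a) * h - hexp
    norm_num at h2
  rw [tanh_eq_sinh_div_cosh, div_eq_iff hcosh, sinh, cosh, exp_neg]
  field_simp
  linear_combination hexp

lemma norm_artanh_le {a : ℂ} (ha : ‖a‖ < 1) :
    ‖artanh a‖ ≤ ‖a‖ + ‖a‖ ^ 2 * (1 - ‖a‖)⁻¹ / 2 := by
  have hsplit : artanh a = ((log (1 + a) - a) - (log (1 + -a) - -a)) / 2 + a := by
    rw [artanh, ← sub_eq_add_neg]
    ring
  have h₁ := norm_log_one_add_sub_self_le ha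
  have h₂ := norm_log_one_add_sub_self_le (z := -a) (by rwa [norm_neg])
  rw [norm_neg] at h₂
  rw [hsplit]
  calc ‖((log (1 + a) - a) - (log (1 + -a) - -a)) / 2 + a‖
      ≤ (‖log (1 + a) - a‖ + ‖log (1 + -a) - -a‖) / 2 + ‖a‖ := by
        grw [norm_add_le, norm_div, norm_sub_le, Complex.norm_two]
    _ ≤ ‖a‖ + ‖a‖ ^ 2 * (1 - ‖a‖)⁻¹ / 2 := by linarith

lemma differentiableOn_artanh : DifferentiableOn ℂ artanh (ball 0 1) := by
  intro a ha
  have ha' : ‖a‖ < 1 := mem_ball_zero_iff.1 ha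
  have h₁ : DifferentiableAt ℂ (fun b => log (1 + b)) a :=
    (differentiableAt_id.const_add 1).clog (one_add_mem_slitPlane ha')
  have h₂ : DifferentiableAt ℂ (fun b => log (1 - b)) a :=
    (differentiableAt_id.const_sub 1).clog (one_sub_mem_slitPlane ha')
  exact ((h₁.sub h₂).div_const 2).differentiableWithinAt

end Complex

lemma bean_artanh {a : ℂ} (ha : ‖a‖ < 1) : bean (artanh a) = (1 + a) ^ ((1 : ℂ) / 2) := by
  rw [bean, tanh_artanh (slitPlane_ne_zero (one_add_mem_slitPlane ha))
    (slitPlane_ne_zero (one_sub_mem_slitPlane ha))]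

lemma subord_bean_of_norm_sub_one_le {p : ℂ → ℂ} (hp : DifferentiableOn ℂ p unitDisk)
    (hp0 : p 0 = 1) (h : ∀ z ∈ unitDisk, ‖p z - 1‖ ≤ 1 / 4) : Subord p bean := by
  have hsq : ∀ z ∈ unitDisk, ‖p z ^ 2 - 1‖ ≤ 9 / 16 := by
    intro z hz
    have hp1 := h z hz
    have hp2 : ‖p z + 1‖ ≤ 9 / 4 := by
      calc ‖p z + 1‖ = ‖(p z - 1) + 2‖ := by ring_nf
        _ ≤ ‖p z - 1‖ + ‖(2 : ℂ)‖ := norm_add_le _ _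
        _ ≤ 9 / 4 := by rw [Complex.norm_two]; linarith
    calc ‖p z ^ 2 - 1‖ = ‖p z - 1‖ * ‖p z + 1‖ := by rw [← norm_mul]; ring_nf
      _ ≤ 1 / 4 * (9 / 4) := mul_le_mul hp1 hp2 (norm_nonneg _) (by norm_num)
      _ = 9 / 16 := by norm_num
  have hsq1 : ∀ z ∈ unitDisk, ‖p z ^ 2 - 1‖ < 1 :=
    fun z hz => (hsq z hz).trans_lt (by norm_num)
  refine ⟨fun z => artanh (p z ^ 2 - 1), ?_, ?_, ?_, ?_⟩
  · exact differentiableOn_artanh.comp ((hp.pow 2).sub_const 1)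
      fun z hz => mem_ball_zero_iff.2 (hsq1 z hz)
  · simp [hp0, artanh]
  · intro z hz
    have ha := hsq z hz
    calc ‖artanh (p z ^ 2 - 1)‖
        ≤ ‖p z ^ 2 - 1‖ + ‖p z ^ 2 - 1‖ ^ 2 * (1 - ‖p z ^ 2 - 1‖)⁻¹ / 2 :=
          norm_artanh_le (hsq1 z hz)
      _ ≤ 9 / 16 + (9 / 16) ^ 2 * (1 - 9 / 16)⁻¹ / 2 := by
          gcongr
          linarith [inv_nonneg.2 (sub_nonneg.2 (hsq1 z hz).le)]
      _ < 1 := by norm_num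
  · intro z hz
    have hre : 0 < (p z).re := by
      have := abs_re_le_norm (p z - 1)
      rw [sub_re, one_re] at this
      linarith [neg_abs_le ((p z).re - 1), h z hz]
    rw [bean_artanh (hsq1 z hz), add_sub_cancel, one_div, sq_cpow_two_inv hre]

lemma norm_mul_pow_le_of_subord_bean {p : ℂ → ℂ} {β : ℂ} {n δ : ℕ} (hδ : δ = 0 ∨ δ = 1)
    (hsub : Subord (fun z => p z ^ δ + β * (z * deriv p z) ^ n) bean) :
    ∀ z ∈ unitDisk, ‖β‖ * ‖z * deriv p z‖ ^ n ≤ (√3 + 1) + ‖p z - 1‖ := by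
  obtain ⟨w, -, -, hw_lt, hw_eq⟩ := hsub
  intro z hz
  have hpow : ‖p z‖ ^ δ ≤ 1 + ‖p z - 1‖ := by
    rcases hδ with rfl | rfl
    · simp
    · simpa using norm_le_norm_add_norm_sub' (p z) 1
  calc ‖β‖ * ‖z * deriv p z‖ ^ n = ‖bean (w z) - p z ^ δ‖ := by
        rw [← hw_eq z hz, add_sub_cancel_left]
        simp only [norm_mul, norm_pow]
    _ ≤ ‖bean (w z)‖ + ‖p z‖ ^ δ := by grw [norm_sub_le, norm_pow]
    _ ≤ √3 + (1 + ‖p z - 1‖) := by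
        gcongr
        exact norm_bean_le_sqrt_three ((abs_im_le_norm _).trans (hw_lt z hz).le)
    _ = (√3 + 1) + ‖p z - 1‖ := by ring

theorem stmt_3 (n : ℕ) (hn : 0 < n) (δ : ℕ) (hδ : δ = 0 ∨ δ = 1) (β : ℂ)
    (hβ : (R₀ + ω₀ ^ δ) * (1 + Real.exp 1 ^ 2) ^ ((3 * (n : ℝ)) / 2) /
        (Real.sqrt 2 * Real.exp 1) ^ n ≤ ‖β‖)
    (p : ℂ → ℂ) (hp : DifferentiableOn ℂ p unitDisk) (hp0 : p 0 = 1)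
    (hsub : Subord (fun z => p z ^ δ + β * (z * deriv p z) ^ n) bean) :
    Subord p bean := by
  have hβ' : 4 ^ n * ((√3 + 1) + 1 / 4) < ‖β‖ := by
    have hsqrt : √3 < 7 / 4 := by
      rw [Real.sqrt_lt' (by norm_num)]
      norm_num
    calc 4 ^ n * ((√3 + 1) + 1 / 4) ≤ 3 * 4 ^ n := by nlinarith [pow_pos (four_pos (α := ℝ)) n]
      _ < _ := three_mul_four_pow_lt hn.ne' hδ
      _ ≤ ‖β‖ := hβ
  have hbound : ∀ z ∈ unitDisk, ‖β‖ * ‖z * deriv p z‖ ^ n ≤ (√3 + 1) + ‖p z - p 0‖ := by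
    simpa only [hp0] using norm_mul_pow_le_of_subord_bean hδ hsub
  have hnear : ∀ z ∈ unitDisk, ‖p z - 1‖ ≤ 1 / 4 := by
    simpa only [hp0] using norm_sub_apply_zero_le_quarter hp hn.ne' (by positivity) hβ' hbound
  exact subord_bean_of_norm_sub_one_le hp hp0 hnear
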